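/- arXiv:2102.02244 — 2 statements merged into one kernel-verified Lean document; each statement's English description precedes it below -/
import Mathlib

section
/- (Singleton bound in the sum-rank metric) For any 𝔽_{q^m}-linear [n,k,d] sum-rank-metric code, k ≤ min{ n - d + 1, (η/m)(ℓm - d + 1) }. -/
/-- `γ_q = ∏_{i=1}^∞ (1 - q^{-i})^{-1}`. -/
noncomputable def gammaq (q : ℕ) : ℝ := ∏' i : ℕ, (1 - (q : ℝ)⁻¹ ^ (i + 1))⁻¹

/-- Rank weight of a block `v ∈ Fqm^η`: the `Fq`-dimension of the span of its entries. -/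
noncomputable def rkw (Fq : Type) {Fqm : Type} [Field Fq] [Field Fqm] [Algebra Fq Fqm]
    {η : ℕ} (v : Fin η → Fqm) : ℕ :=
  Module.finrank Fq (Submodule.span Fq (Set.range v))

/-- Sum-rank weight of a vector in `Fqm^(ℓη)`, given as `ℓ` blocks of length `η`. -/
noncomputable def srw (Fq : Type) {Fqm : Type} [Field Fq] [Field Fqm] [Algebra Fq Fqm]
    {ℓ η : ℕ} (x : Fin ℓ → Fin η → Fqm) : ℕ :=
  ∑ i, rkw Fq (x i)

/-- Number of vectors in `Fqm^(ℓη)` of sum-rank weight exactly `t`. -/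
noncomputable def VolS (Fq Fqm : Type) [Field Fq] [Field Fqm] [Algebra Fq Fqm]
    (ℓ η t : ℕ) : ℕ :=
  Nat.card {x : Fin ℓ → Fin η → Fqm // srw Fq x = t}

/-- Number of vectors in `Fqm^(ℓη)` of sum-rank weight at most `t`. -/
noncomputable def VolB (Fq Fqm : Type) [Field Fq] [Field Fqm] [Algebra Fq Fqm]
    (ℓ η t : ℕ) : ℕ :=
  Nat.card {x : Fin ℓ → Fin η → Fqm // srw Fq x ≤ t}

/-!
A weight that is bounded by the support size of a vector under a coordinate map
`f : V → (ι → N)` gives a Singleton bound by puncturing: for a code of minimum weight `d`,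
forgetting any `d - 1` coordinates is injective, so `dim C ≤ (|ι| - d + 1) · dim N`.
Over `𝔽_{q^m}` the coordinates are the `ℓη` entries (a block vanishing outside `J` has rank
at most `|J|`), giving `k ≤ n - d + 1`. Over `𝔽_q` they are the `ℓm` rows of the
`𝔽_q`-expansions of the blocks, each in `𝔽_q^η`, and `C` has `𝔽_q`-dimension `mk`, giving
`mk ≤ η(ℓm - d + 1)`.
-/
open Module Submodule Finset

theorem Submodule.finrank_le_card_sub_card_mul {K V N ι : Type*} [Field K]
    [AddCommGroup V] [Module K V] [AddCommGroup N] [Module K N] [FiniteDimensional K N]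
    [Fintype ι] [DecidableEq ι] (C : Submodule K V) (f : V →ₗ[K] ι → N) (T : Finset ι)
    (hT : ∀ c ∈ C, (∀ i ∉ T, f c i = 0) → c = 0) :
    finrank K C ≤ (Fintype.card ι - #T) * finrank K N := by
  let g : C →ₗ[K] (Tᶜ : Finset ι) → N :=
    LinearMap.pi fun i => LinearMap.proj i.1 ∘ₗ f ∘ₗ C.subtype
  have hg : Function.Injective g := by
    rw [← LinearMap.ker_eq_bot, LinearMap.ker_eq_bot']
    intro c hc
    refine Subtype.ext (hT c c.2 fun i hi => ?_)
    exact congrFun hc ⟨i, Finset.mem_compl.2 hi⟩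
  simpa [Module.finrank_pi_fintype, Finset.card_compl] using
    LinearMap.finrank_le_finrank_of_injective hg

theorem Submodule.finrank_add_mul_le_of_weight {K V N ι : Type*} [Field K]
    [AddCommGroup V] [Module K V] [AddCommGroup N] [Module K N] [FiniteDimensional K N]
    [Fintype ι] (C : Submodule K V) (hC : C ≠ ⊥) (f : V →ₗ[K] ι → N) (w : V → ℕ) {d : ℕ}
    (hd0 : 0 < d) (hw : ∀ v (T : Finset ι), (∀ i ∉ T, f v i = 0) → w v ≤ #T)
    (hd : ∀ c ∈ C, c ≠ 0 → d ≤ w c) :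
    finrank K C + d * finrank K N ≤ (Fintype.card ι + 1) * finrank K N := by
  classical
  obtain ⟨c, hcC, hc0⟩ := (Submodule.ne_bot_iff C).1 hC
  have hdι : d ≤ Fintype.card ι := (hd c hcC hc0).trans (by simpa using hw c univ (by simp))
  obtain ⟨T, -, hT⟩ := Finset.exists_subset_card_eq (s := (univ : Finset ι))
    (n := d - 1) (by rw [card_univ]; omega)
  have hdim : finrank K C ≤ (Fintype.card ι - #T) * finrank K N :=
    C.finrank_le_card_sub_card_mul f T fun c hcC hcT => by
      by_contra hc0
      have := (hd c hcC hc0).trans (hw c T hcT)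
      omega
  calc finrank K C + d * finrank K N
      ≤ (Fintype.card ι - #T) * finrank K N + d * finrank K N := by gcongr
    _ = (Fintype.card ι + 1) * finrank K N := by rw [← add_mul]; congr 1; omega

section SumRank

variable {Fq Fqm : Type} [Field Fq] [Field Fqm] [Algebra Fq Fqm] {ℓ η : ℕ} {ι α : Type*}

theorem rkw_eq_zero_iff {v : Fin η → Fqm} : rkw Fq v = 0 ↔ v = 0 := by
  have := FiniteDimensional.span_of_finite Fq (Set.finite_range v)
  rw [rkw, Submodule.finrank_eq_zero, span_eq_bot, funext_iff, Set.forall_mem_range]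
  rfl

theorem srw_eq_zero_iff {x : Fin ℓ → Fin η → Fqm} : srw Fq x = 0 ↔ x = 0 := by
  simp [srw, Finset.sum_eq_zero_iff, rkw_eq_zero_iff, funext_iff]

theorem rkw_le_card (v : Fin η → Fqm) (s : Finset α) (b : α → Fqm)
    (h : ∀ j, v j ∈ span Fq (b '' s)) : rkw Fq v ≤ #s := by
  classical
  calc rkw Fq v ≤ finrank Fq (span Fq (s.image b : Set Fqm)) := by
        rw [← Finset.coe_image] at h
        exact Submodule.finrank_mono (span_le.2 (Set.range_subset_iff.2 h))
    _ ≤ #(s.image b) := finrank_span_finset_le_card _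
    _ ≤ #s := card_image_le

theorem srw_le_card (x : Fin ℓ → Fin η → Fqm) (T : Finset (Fin ℓ × α))
    (b : Fin ℓ × α → Fqm) (h : ∀ i j, x i j ∈ span Fq (b '' ({p ∈ T | p.1 = i} : Finset _))) :
    srw Fq x ≤ #T := by
  classical
  calc srw Fq x ≤ ∑ i, #{p ∈ T | p.1 = i} := sum_le_sum fun i _ => rkw_le_card _ _ b (h i)
    _ = #T := (card_eq_sum_card_fiberwise fun p _ => mem_univ p.1).symm

theorem srw_le_card_of_eq_zero (x : Fin ℓ → Fin η → Fqm) (T : Finset (Fin ℓ × Fin η))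
    (h : ∀ p ∉ T, Function.uncurry x p = 0) : srw Fq x ≤ #T := by
  refine srw_le_card x T (Function.uncurry x) fun i j => ?_
  by_cases hij : (i, j) ∈ T
  · exact subset_span ⟨(i, j), by simp [hij], rfl⟩
  · rw [← Function.uncurry_apply_pair x, h _ hij]
    exact zero_mem _

/-- `coordRows B x (i, j)` is the `j`-th row of the matrix over `Fq` obtained by expanding the
`i`-th block of `x` in the basis `B`. -/
noncomputable def coordRows (B : Basis ι Fq Fqm) :
    (Fin ℓ → Fin η → Fqm) →ₗ[Fq] (Fin ℓ × ι → Fin η → Fq) :=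
  LinearMap.pi fun p => LinearMap.pi fun k =>
    B.coord p.2 ∘ₗ LinearMap.proj k ∘ₗ LinearMap.proj p.1

theorem coordRows_apply (B : Basis ι Fq Fqm) (x : Fin ℓ → Fin η → Fqm)
    (p : Fin ℓ × ι) (k : Fin η) : coordRows B x p k = B.repr (x p.1 k) p.2 :=
  rfl

theorem srw_le_card_of_coordRows_eq_zero (B : Basis ι Fq Fqm)
    (x : Fin ℓ → Fin η → Fqm) (T : Finset (Fin ℓ × ι)) (h : ∀ p ∉ T, coordRows B x p = 0) :
    srw Fq x ≤ #T := by
  refine srw_le_card x T (fun p => B p.2) fun i k => ?_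
  rw [← Set.image_image B Prod.snd, B.mem_span_image]
  intro j hj
  have hT : (i, j) ∈ T := by
    by_contra hT
    exact Finsupp.mem_support_iff.1 hj (by simpa [coordRows_apply] using congrFun (h _ hT) k)
  exact ⟨(i, j), by simp [hT], rfl⟩

end SumRank

theorem Module.finrank_eq_of_card_eq_pow {K V : Type*} [Field K] [Fintype K] [AddCommGroup V]
    [Module K V] [Fintype V] {q m : ℕ} (hq : Fintype.card K = q)
    (hV : Fintype.card V = q ^ m) : finrank K V = m :=
  Nat.pow_right_injective (hq ▸ Fintype.one_lt_card) <| by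
    dsimp only
    rw [← hV, card_eq_pow_finrank (K := K), hq]

theorem stmt15_general (q m ℓ η k d : ℕ) (Fq Fqm : Type) [Field Fq] [Fintype Fq] [Field Fqm]
    [Fintype Fqm] [Algebra Fq Fqm] (hq : Fintype.card Fq = q)
    (hqm : Fintype.card Fqm = q ^ m)
    (C : Submodule Fqm (Fin ℓ → Fin η → Fqm)) (hk : Module.finrank Fqm C = k)
    (hd1 : ∀ c ∈ C, c ≠ 0 → d ≤ srw Fq c)
    (hd2 : ∃ c ∈ C, c ≠ 0 ∧ srw Fq c = d) :
    (k : ℝ) ≤ min ((ℓ * η : ℕ) - (d : ℝ) + 1)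
      ((η : ℝ) / m * ((ℓ * m : ℕ) - (d : ℝ) + 1)) := by
  have hfr : finrank Fq Fqm = m := finrank_eq_of_card_eq_pow hq hqm
  have hm : (0 : ℝ) < m := by exact_mod_cast hfr ▸ finrank_pos
  obtain ⟨c, hcC, hc0, hcd⟩ := hd2
  have hd0 : 0 < d := hcd ▸ Nat.pos_of_ne_zero (srw_eq_zero_iff.not.2 hc0)
  have hC : C ≠ ⊥ := (Submodule.ne_bot_iff C).2 ⟨c, hcC, hc0⟩
  have hFqm : k + d ≤ ℓ * η + 1 := by
    simpa [hk] using C.finrank_add_mul_le_of_weight hC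
      (LinearEquiv.curry Fqm Fqm (Fin ℓ) (Fin η)).symm.toLinearMap (srw Fq) hd0
      srw_le_card_of_eq_zero hd1
  have hFq : m * k + d * η ≤ (ℓ * m + 1) * η := by
    have := (C.restrictScalars Fq).finrank_add_mul_le_of_weight
      (mt (restrictScalars_eq_bot_iff _ _ _).1 hC) (coordRows (finBasisOfFinrankEq Fq Fqm hfr))
      (srw Fq) hd0 (srw_le_card_of_coordRows_eq_zero _) hd1
    have hCFq : finrank Fq (C.restrictScalars Fq) = m * k := by
      rw [← hfr, ← hk]
      exact (finrank_mul_finrank Fq Fqm C).symm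
    rwa [hCFq, finrank_fin_fun, Fintype.card_prod, Fintype.card_fin, Fintype.card_fin] at this
  have hFqm' : (k + d : ℝ) ≤ ℓ * η + 1 := by exact_mod_cast hFqm
  have hFq' : (m * k + d * η : ℝ) ≤ (ℓ * m + 1) * η := by exact_mod_cast hFq
  refine le_min (by push_cast; linarith) ?_
  rw [div_mul_eq_mul_div, le_div_iff₀ hm]
  push_cast
  linarith

/-- Singleton bound in the sum-rank metric. -/
theorem stmt15 (q m ℓ η k d : ℕ) (Fq Fqm : Type) [Field Fq] [Fintype Fq] [Field Fqm]
    [Fintype Fqm] [Algebra Fq Fqm] (hq : Fintype.card Fq = q)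
    (hqm : Fintype.card Fqm = q ^ m) (hℓ : 0 < ℓ) (hη : 0 < η) (hm : 0 < m)
    (C : Submodule Fqm (Fin ℓ → Fin η → Fqm)) (hk : Module.finrank Fqm C = k)
    (hd1 : ∀ c ∈ C, c ≠ 0 → d ≤ srw Fq c)
    (hd2 : ∃ c ∈ C, c ≠ 0 ∧ srw Fq c = d) :
    (k : ℝ) ≤ min ((ℓ * η : ℕ) - (d : ℝ) + 1)
      ((η : ℝ) / m * ((ℓ * m : ℕ) - (d : ℝ) + 1)) :=
  stmt15_general q m ℓ η k d Fq Fqm hq hqm C hk hd1 hd2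
end

section
/- The cardinality of the set U_{ℓ,t} of block-diagonal matrices U = U_1 ⊕ ... ⊕ U_ℓ where each U_i ∈ 𝔽_q^{t_i×η} is a full-rank matrix in reduced row echelon form and ∑ t_i = t, equals ∑_{(t_1,...,t_ℓ)} ∏_{i=1}^ℓ [η choose t_i]_q, and is at most C(t+ℓ-1, ℓ-1) · q^{t(η - t/ℓ)} · γ_q^ℓ. -/
/-- The set of ordered tuples `(t_1,...,t_ℓ)` of nonnegative integers with
`t_1 + ... + t_ℓ = t` and each `t_i ≤ μ`. -/
def tuples (ℓ t μ : ℕ) : Finset (Fin ℓ → ℕ) :=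
  (Fintype.piFinset fun _ => Finset.range (μ + 1)).filter fun f => ∑ i, f i = t

/-- A (full-row-rank) matrix is in reduced row echelon form: there are strictly
increasing pivot columns, pivot entries are `1`, entries to the left of a pivot are `0`,
and pivot columns have zeros in all other rows. -/
def IsRREF {F : Type} [Field F] {a b : ℕ} (M : Matrix (Fin a) (Fin b) F) : Prop :=
  ∃ p : Fin a → Fin b, StrictMono p ∧ (∀ i, M i (p i) = 1) ∧
    (∀ (i : Fin a) (j : Fin b), (j : ℕ) < (p i : ℕ) → M i j = 0) ∧
    (∀ i i', i' ≠ i → M i' (p i) = 0)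

/-- The Gaussian (`q`-)binomial coefficient `[n choose t]_q`, defined as the number of
`t`-dimensional subspaces of `F^n`. -/
noncomputable def qBinom (F : Type) [Field F] (n t : ℕ) : ℕ :=
  Nat.card {W : Submodule F (Fin n → F) // Module.finrank F W = t}

/-- The cardinality of the set `U_{ℓ,t}` of block-diagonal matrices
`U = U_1 ⊕ ... ⊕ U_ℓ` with `U_i ∈ Fq^{t_i × η}` full-row-rank matrices in reduced row
echelon form, `∑ t_i = t`, `t_i ≤ μ`. -/
noncomputable def cardU (Fq : Type) [Field Fq] (ℓ η μ t : ℕ) : ℕ :=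
  Nat.card ((f : {f : Fin ℓ → ℕ // f ∈ tuples ℓ t μ}) ×
    {U : (i : Fin ℓ) → Matrix (Fin (f.1 i)) (Fin η) Fq //
      ∀ i, (U i).rank = f.1 i ∧ IsRREF (U i)})

/-!
Sending a full-rank matrix in reduced row echelon form to its row space is a bijection onto the
subspaces of that dimension. The pivot columns of a subspace `W` are the leading positions of its
nonzero vectors; restriction to them is an isomorphism of `W` onto the coordinate space, and the
echelon rows are the preimages of the standard basis. This gives the exact formula for
`|U_{ℓ,t}|`. Fibering linearly independent `k`-tuples over their span gives
`[η choose k]_q · ∏_{i<k} (q^k - q^i) = ∏_{i<k} (q^η - q^i)`, hence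
`[η choose k]_q ≤ q^{k(η-k)} γ_q`. Cauchy–Schwarz gives `∑ t_i (η - t_i) ≤ t (η - t/ℓ)`, and
stars and bars bounds the number of tuples by `C(t+ℓ-1, ℓ-1)`.
-/

open Finset Module

section Leading

variable {κ : Type*} [LinearOrder κ]

def IsLeading {R : Type*} [Zero R] (v : κ → R) (j : κ) : Prop := v j ≠ 0 ∧ ∀ j' < j, v j' = 0

lemma IsLeading.unique {R : Type*} [Zero R] {v : κ → R} {j j' : κ} (h : IsLeading v j)
    (h' : IsLeading v j') : j = j' := by
  by_contra hne
  rcases lt_or_gt_of_ne hne with hlt | hlt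
  · exact h.1 (h'.2 j hlt)
  · exact h'.1 (h.2 j' hlt)

lemma exists_isLeading [WellFoundedLT κ] {R : Type*} [Zero R] {v : κ → R} (hv : v ≠ 0) :
    ∃ j, IsLeading v j := by
  obtain ⟨j, hj⟩ := Function.ne_iff.mp hv
  obtain ⟨j₀, hj₀, hmin⟩ := wellFounded_lt.has_min {j | v j ≠ 0} ⟨j, hj⟩
  exact ⟨j₀, hj₀, fun j' hj' => by_contra fun h => hmin j' h hj'⟩

lemma linearIndependent_of_isLeading {F ι : Type*} [Field F] {v : ι → κ → F} {p : ι → κ}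
    (hp : Function.Injective p) (hv : ∀ i, IsLeading (v i) (p i)) : LinearIndependent F v := by
  classical
  rw [linearIndependent_iff']
  intro s c hsum i hi
  by_contra hci
  obtain ⟨i₀, hi₀, hmin⟩ :=
    exists_min_image (s.filter fun i => c i ≠ 0) p ⟨i, mem_filter.mpr ⟨hi, hci⟩⟩
  rw [mem_filter] at hi₀
  have hval := congrFun hsum (p i₀)
  rw [Finset.sum_apply, sum_eq_single_of_mem i₀ hi₀.1] at hval
  · exact mul_ne_zero hi₀.2 (hv i₀).1 hval
  · intro j hj hji₀
    by_cases hcj : c j = 0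
    · simp [hcj]
    · have hlt : p i₀ < p j :=
        lt_of_le_of_ne (hmin j (mem_filter.mpr ⟨hj, hcj⟩)) (hp.ne (Ne.symm hji₀))
      simp [(hv j).2 _ hlt]

end Leading

section Pivots

variable {F : Type} [Field F] {η : ℕ} (W : Submodule F (Fin η → F))

def pivots : Set (Fin η) := {j | ∃ w ∈ W, IsLeading w j}

def restrictPivots : W →ₗ[F] (pivots W → F) :=
  LinearMap.pi fun j => (LinearMap.proj (j : Fin η)).comp W.subtype

lemma restrictPivots_injective : Function.Injective (restrictPivots W) := by
  rw [← LinearMap.ker_eq_bot, LinearMap.ker_eq_bot']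
  intro w hw
  by_contra hne
  obtain ⟨j, hj⟩ := exists_isLeading (Subtype.coe_injective.ne hne : (w : Fin η → F) ≠ 0)
  exact hj.1 (congrFun hw ⟨j, w, w.2, hj⟩)

lemma card_pivots : Nat.card (pivots W) = finrank F W := by
  classical
  apply le_antisymm
  · choose g hgW hg using fun j : pivots W => j.2
    have hind : LinearIndependent F g := linearIndependent_of_isLeading Subtype.val_injective hg
    rw [Nat.card_eq_fintype_card, ← finrank_span_eq_card hind]
    exact Submodule.finrank_mono (Submodule.span_le.mpr (Set.range_subset_iff.mpr hgW))
  · have := LinearMap.finrank_le_finrank_of_injective (restrictPivots_injective W)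
    rwa [finrank_fintype_fun_eq_card, ← Nat.card_eq_fintype_card] at this

lemma restrictPivots_bijective : Function.Bijective (restrictPivots W) := by
  classical
  refine ⟨restrictPivots_injective W,
    (LinearMap.injective_iff_surjective_of_finrank_eq_finrank ?_).mp (restrictPivots_injective W)⟩
  rw [finrank_fintype_fun_eq_card, ← Nat.card_eq_fintype_card, card_pivots]

end Pivots

section RREF

variable {F : Type} [Field F] {k η : ℕ}

lemma isRREF_iff {M : Matrix (Fin k) (Fin η) F} :
    IsRREF M ↔ ∃ p : Fin k → Fin η, StrictMono p ∧ (∀ i, IsLeading (M i) (p i)) ∧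
      ∀ i i', M i' (p i) = if i' = i then 1 else 0 := by
  constructor
  · rintro ⟨p, hp, h1, hleft, h0⟩
    refine ⟨p, hp, fun i => ⟨by simp [h1 i], fun j hj => hleft i j hj⟩, fun i i' => ?_⟩
    split_ifs with h
    · exact h ▸ h1 i
    · exact h0 i i' h
  · rintro ⟨p, hp, hlead, hcol⟩
    exact ⟨p, hp, fun i => by simp [hcol], fun i j hj => (hlead i).2 j hj,
      fun i i' h => by simp [hcol, h]⟩

lemma eq_sum_smul_of_mem_span {M : Matrix (Fin k) (Fin η) F} {p : Fin k → Fin η}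
    (hcol : ∀ i i', M i' (p i) = if i' = i then 1 else 0) {v : Fin η → F}
    (hv : v ∈ Submodule.span F (Set.range M)) : v = ∑ i, v (p i) • M i := by
  obtain ⟨c, rfl⟩ := (Submodule.mem_span_range_iff_exists_fun F).mp hv
  congr! with i
  simp [Finset.sum_apply, hcol]

lemma range_eq_pivots {M : Matrix (Fin k) (Fin η) F} {p : Fin k → Fin η} (hp : StrictMono p)
    (hlead : ∀ i, IsLeading (M i) (p i)) (hcol : ∀ i i', M i' (p i) = if i' = i then 1 else 0) :
    Set.range p = pivots (Submodule.span F (Set.range M)) := by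
  ext j
  constructor
  · rintro ⟨i, rfl⟩
    exact ⟨M i, Submodule.subset_span ⟨i, rfl⟩, hlead i⟩
  · rintro ⟨w, hw, hj⟩
    have hrepr := eq_sum_smul_of_mem_span hcol hw
    have hS : ∃ i, w (p i) ≠ 0 := by
      by_contra! h
      apply hj.1
      rw [hrepr]
      simp [h]
    -- the first row occurring in `w` determines its leading position
    obtain ⟨i₀, hi₀, hmin⟩ := wellFounded_lt.has_min {i | w (p i) ≠ 0} hS
    refine ⟨i₀, IsLeading.unique ⟨hi₀, fun j' hj' => ?_⟩ hj⟩
    rw [hrepr, Finset.sum_apply]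
    refine sum_eq_zero fun i _ => ?_
    rcases lt_or_ge i i₀ with hi | hi
    · simp [not_not.mp (hmin i · hi)]
    · simp [(hlead i).2 j' (hj'.trans_le (hp.monotone hi))]

theorem IsRREF.eq_of_span_eq {M M' : Matrix (Fin k) (Fin η) F} (hM : IsRREF M)
    (hM' : IsRREF M')
    (h : Submodule.span F (Set.range M) = Submodule.span F (Set.range M')) : M = M' := by
  obtain ⟨p, hp, hlead, hcol⟩ := isRREF_iff.mp hM
  obtain ⟨p', hp', hlead', hcol'⟩ := isRREF_iff.mp hM'
  obtain rfl : p = p' := (hp.range_inj hp').mp <| by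
    rw [range_eq_pivots hp hlead hcol, range_eq_pivots hp' hlead' hcol', h]
  funext i
  rw [eq_sum_smul_of_mem_span hcol (h ▸ Submodule.subset_span ⟨i, rfl⟩ : M' i ∈ _)]
  funext j
  simp [Finset.sum_apply, hcol', ite_apply]

theorem exists_isRREF_span_eq (W : Submodule F (Fin η → F)) (hW : finrank F W = k) :
    ∃ M : Matrix (Fin k) (Fin η) F, IsRREF M ∧ Submodule.span F (Set.range M) = W := by
  classical
  have hcard : (pivots W).toFinset.card = k := by
    rw [Set.toFinset_card, ← Nat.card_eq_fintype_card, card_pivots, hW]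
  set p := (pivots W).toFinset.orderEmbOfFin hcard
  have hpW : ∀ i, p i ∈ pivots W := fun i => Set.mem_toFinset.mp (orderEmbOfFin_mem _ hcard i)
  let e := LinearEquiv.ofBijective (restrictPivots W) (restrictPivots_bijective W)
  let M : Matrix (Fin k) (Fin η) F := fun i => e.symm (Pi.single ⟨p i, hpW i⟩ 1)
  have hMP : ∀ i (j : pivots W), M i j = if (j : Fin η) = p i then 1 else 0 := by
    intro i j
    have : M i j = Pi.single (M := fun _ => F) ⟨p i, hpW i⟩ 1 j :=
      congrFun (e.apply_symm_apply _) j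
    simp [this, Pi.single_apply, Subtype.ext_iff]
  have hcol : ∀ i i', M i' (p i) = if i' = i then 1 else 0 := fun i i' => by
    simp [hMP i' ⟨p i, hpW i⟩, p.injective.eq_iff, eq_comm]
  have hlead : ∀ i, IsLeading (M i) (p i) := by
    intro i
    have hne : M i ≠ 0 := fun h => by simpa [h] using hcol i i
    obtain ⟨j, hj⟩ := exists_isLeading hne
    have hjW : j ∈ pivots W := ⟨M i, (e.symm _).2, hj⟩
    obtain rfl : j = p i := by
      by_contra h
      exact hj.1 (by simpa [h] using hMP i ⟨j, hjW⟩)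
    exact hj
  have hind : LinearIndependent F M := linearIndependent_of_isLeading p.injective hlead
  refine ⟨M, isRREF_iff.mpr ⟨p, p.strictMono, hlead, hcol⟩, ?_⟩
  apply Submodule.eq_of_le_of_finrank_le
  · exact Submodule.span_le.mpr (Set.range_subset_iff.mpr fun i => (e.symm _).2)
  · rw [hW, finrank_span_eq_card hind, Fintype.card_fin]

theorem card_isRREF_eq_qBinom (k : ℕ) :
    Nat.card {M : Matrix (Fin k) (Fin η) F // M.rank = k ∧ IsRREF M} = qBinom F η k := by
  refine Nat.card_congr (Equiv.ofBijective
    (fun M => ⟨Submodule.span F (Set.range M.1), M.1.rank_eq_finrank_span_row.symm.trans M.2.1⟩)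
    ⟨fun M M' h => Subtype.ext (M.2.2.eq_of_span_eq M'.2.2 (congrArg Subtype.val h)), ?_⟩)
  rintro ⟨W, hW⟩
  obtain ⟨M, hM, hspan⟩ := exists_isRREF_span_eq W hW
  refine ⟨⟨M, ?_, hM⟩, Subtype.ext hspan⟩
  rw [Matrix.rank_eq_finrank_span_row, Matrix.row, hspan, hW]

theorem cardU_eq_sum_prod_qBinom [Finite F] (ℓ μ t : ℕ) :
    cardU F ℓ η μ t = ∑ f ∈ tuples ℓ t μ, ∏ i, qBinom F η (f i) := by
  rw [cardU, Nat.card_sigma, ← sum_coe_sort (tuples ℓ t μ)]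
  refine sum_congr rfl fun f _ => ?_
  rw [Nat.card_congr (Equiv.subtypePiEquivPi (β := fun i => Matrix (Fin (f.1 i)) (Fin η) F)
    (p := fun i M => M.rank = f.1 i ∧ IsRREF M)), Nat.card_pi]
  simp only [card_isRREF_eq_qBinom]

end RREF

section Grassmannian

variable {K V : Type*} [Field K] [AddCommGroup V] [Module K V]

lemma span_eq_of_linearIndependent [FiniteDimensional K V] {k : ℕ} {W : Submodule K V}
    (hW : finrank K W = k) {s : Fin k → V} (hs : LinearIndependent K s) (hsW : ∀ i, s i ∈ W) :
    Submodule.span K (Set.range s) = W :=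
  Submodule.eq_of_le_of_finrank_le (Submodule.span_le.mpr (Set.range_subset_iff.mpr hsW))
    (by rw [hW, finrank_span_eq_card hs, Fintype.card_fin])

variable [Fintype K] [Finite V]

def linearIndependentSpanEquiv {k : ℕ} (W : Submodule K V) (hW : finrank K W = k) :
    {s : Fin k → V // LinearIndependent K s ∧ Submodule.span K (Set.range s) = W} ≃
      {s : Fin k → W // LinearIndependent K s} where
  toFun s := ⟨fun i => ⟨s.1 i, s.2.2.le (Submodule.subset_span ⟨i, rfl⟩)⟩,
    .of_comp W.subtype s.2.1⟩
  invFun s := ⟨W.subtype ∘ s.1, s.2.map' _ W.ker_subtype,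
    span_eq_of_linearIndependent hW (s.2.map' _ W.ker_subtype) fun i => (s.1 i).2⟩
  left_inv _ := rfl
  right_inv _ := rfl

theorem card_submodule_finrank_eq_mul_prod {k : ℕ} (hk : k ≤ finrank K V) :
    Nat.card {W : Submodule K V // finrank K W = k} *
        ∏ i : Fin k, (Fintype.card K ^ k - Fintype.card K ^ (i : ℕ)) =
      ∏ i : Fin k, (Fintype.card K ^ finrank K V - Fintype.card K ^ (i : ℕ)) := by
  let span : {s : Fin k → V // LinearIndependent K s} → {W : Submodule K V // finrank K W = k} :=
    fun s => ⟨Submodule.span K (Set.range s.1), by rw [finrank_span_eq_card s.2, Fintype.card_fin]⟩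
  have hfiber : ∀ W, Nat.card {s // span s = W} =
      ∏ i : Fin k, (Fintype.card K ^ k - Fintype.card K ^ (i : ℕ)) := by
    intro W
    have := card_linearIndependent (K := K) (V := W.1) (k := k) W.2.ge
    rw [W.2, ← Nat.card_congr (linearIndependentSpanEquiv W.1 W.2)] at this
    rw [← this]
    exact Nat.card_congr ((Equiv.subtypeEquivRight fun s => Subtype.ext_iff).trans
      (Equiv.subtypeSubtypeEquivSubtypeInter _ fun s => Submodule.span K (Set.range s) = W.1))
  have := Fintype.ofFinite {W : Submodule K V // finrank K W = k}
  rw [← card_linearIndependent hk, ← Nat.card_congr (Equiv.sigmaFiberEquiv span), Nat.card_sigma,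
    sum_congr rfl fun W _ => hfiber W, sum_const, card_univ, smul_eq_mul, Nat.card_eq_fintype_card]

end Grassmannian

section GammaBound

lemma multipliable_inv_one_sub_pow_succ {x : ℝ} (h0 : 0 ≤ x) (h1 : x < 1) :
    Multipliable fun n : ℕ => (1 - x ^ (n + 1))⁻¹ := by
  have hsum : Summable fun n : ℕ => ‖-x ^ (n + 1)‖ := by
    simpa [abs_of_nonneg h0, pow_succ] using (summable_geometric_of_lt_one h0 h1).mul_right x
  have hne : ∀ n : ℕ, 1 + -x ^ (n + 1) ≠ 0 := fun n => by
    linarith [pow_lt_one₀ h0 h1 n.add_one_ne_zero]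
  simpa [sub_eq_add_neg] using
    (multipliable_one_add_of_summable hsum).inv₀ (tprod_one_add_ne_zero_of_summable hne hsum)

lemma prod_range_le_tprod_inv_one_sub_pow_succ {x : ℝ} (h0 : 0 ≤ x) (h1 : x < 1) (k : ℕ) :
    ∏ j ∈ range k, (1 - x ^ (j + 1))⁻¹ ≤ ∏' j : ℕ, (1 - x ^ (j + 1))⁻¹ := by
  have hfac : ∀ n : ℕ, 1 ≤ (1 - x ^ (n + 1))⁻¹ := fun n => by
    have := pow_nonneg h0 (n + 1)
    rw [one_le_inv₀ (by linarith [pow_lt_one₀ h0 h1 n.add_one_ne_zero])]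
    linarith
  refine (monotone_nat_of_le_succ fun n => ?_).ge_of_tendsto
    (multipliable_inv_one_sub_pow_succ h0 h1).hasProd.tendsto_prod_nat k
  rw [prod_range_succ]
  exact le_mul_of_one_le_right (prod_nonneg fun j _ => zero_le_one.trans (hfac j)) (hfac n)

lemma prod_range_le_gammaq {q : ℕ} (hq : 1 < q) (k : ℕ) :
    ∏ j ∈ range k, (1 - (q : ℝ)⁻¹ ^ (j + 1))⁻¹ ≤ gammaq q :=
  prod_range_le_tprod_inv_one_sub_pow_succ (by positivity)
    (inv_lt_one_of_one_lt₀ (by exact_mod_cast hq)) k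

lemma one_le_gammaq {q : ℕ} (hq : 1 < q) : 1 ≤ gammaq q := by
  simpa using prod_range_le_gammaq hq 0

end GammaBound

section QBinomBound

lemma prod_range_pow_sub_pow {q : ℝ} (hq : q ≠ 0) (k : ℕ) :
    ∏ i ∈ range k, (q ^ k - q ^ i) = q ^ (k * k) * ∏ j ∈ range k, (1 - q⁻¹ ^ (j + 1)) := by
  have hconst : q ^ (k * k) = ∏ _i ∈ range k, q ^ k := by rw [prod_const, card_range, pow_mul]
  rw [← prod_range_reflect (fun j => 1 - q⁻¹ ^ (j + 1)), hconst, ← prod_mul_distrib]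
  refine prod_congr rfl fun i hi => ?_
  have hik := mem_range.mp hi
  rw [show k - 1 - i + 1 = k - i by omega, mul_sub, mul_one, inv_pow, ← pow_sub₀ q hq (by omega),
    show k - (k - i) = i by omega]

lemma cast_prod_range_pow_sub_pow {q n k : ℕ} (hq : 0 < q) (hkn : k ≤ n) :
    ((∏ i ∈ range k, (q ^ n - q ^ i) : ℕ) : ℝ) = ∏ i ∈ range k, ((q : ℝ) ^ n - (q : ℝ) ^ i) := by
  push_cast
  refine prod_congr rfl fun i hi => ?_
  rw [Nat.cast_sub (Nat.pow_le_pow_right hq ((mem_range.mp hi).le.trans hkn))]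
  push_cast
  rfl

variable (Fq : Type) [Field Fq] [Fintype Fq] {η k : ℕ}

lemma qBinom_mul_prod_eq (hk : k ≤ η) :
    (qBinom Fq η k : ℝ) * ∏ i ∈ range k, ((Fintype.card Fq : ℝ) ^ k - (Fintype.card Fq : ℝ) ^ i) =
      ∏ i ∈ range k, ((Fintype.card Fq : ℝ) ^ η - (Fintype.card Fq : ℝ) ^ i) := by
  have hid := card_submodule_finrank_eq_mul_prod (K := Fq) (V := Fin η → Fq) (k := k)
    (by simpa using hk)
  rw [finrank_fin_fun, Fin.prod_univ_eq_prod_range (fun i => Fintype.card Fq ^ k - _ ^ i),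
    Fin.prod_univ_eq_prod_range (fun i => Fintype.card Fq ^ η - _ ^ i)] at hid
  have hq : 0 < Fintype.card Fq := Fintype.card_pos
  rw [← cast_prod_range_pow_sub_pow hq le_rfl, ← cast_prod_range_pow_sub_pow hq hk, qBinom,
    ← Nat.cast_mul, hid]

lemma qBinom_le_mul_prod_inv (hk : k ≤ η) :
    (qBinom Fq η k : ℝ) ≤ (Fintype.card Fq : ℝ) ^ (k * (η - k)) *
      ∏ j ∈ range k, (1 - (Fintype.card Fq : ℝ)⁻¹ ^ (j + 1))⁻¹ := by
  have hq : (1 : ℝ) < Fintype.card Fq := by exact_mod_cast Fintype.one_lt_card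
  set q : ℝ := (Fintype.card Fq : ℝ)
  have hP : 0 < ∏ j ∈ range k, (1 - q⁻¹ ^ (j + 1)) := prod_pos fun j _ => sub_pos.mpr <|
    pow_lt_one₀ (by positivity) (inv_lt_one_of_one_lt₀ hq) j.add_one_ne_zero
  have hnum : ∏ i ∈ range k, (q ^ η - q ^ i) ≤ q ^ (k * (η - k)) * q ^ (k * k) := by
    rw [← pow_add, ← mul_add, Nat.sub_add_cancel hk, mul_comm, pow_mul, ← card_range k,
      ← prod_const, card_range]
    exact prod_le_prod (fun i hi => sub_nonneg.mpr (pow_le_pow_right₀ hq.le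
      ((mem_range.mp hi).le.trans hk))) fun i _ => sub_le_self _ (by positivity)
  rw [prod_inv_distrib, ← div_eq_mul_inv, le_div_iff₀ hP]
  refine le_of_mul_le_mul_right ?_ (pow_pos (by positivity : 0 < q) (k * k))
  calc (qBinom Fq η k * ∏ j ∈ range k, (1 - q⁻¹ ^ (j + 1))) * q ^ (k * k)
      = qBinom Fq η k * ∏ i ∈ range k, (q ^ k - q ^ i) := by
        rw [prod_range_pow_sub_pow (by positivity)]
        ring
    _ ≤ q ^ (k * (η - k)) * q ^ (k * k) := (qBinom_mul_prod_eq Fq hk).trans_le hnum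

lemma qBinom_le_gammaq (hk : k ≤ η) :
    (qBinom Fq η k : ℝ) ≤ (Fintype.card Fq : ℝ) ^ (k * (η - k)) * gammaq (Fintype.card Fq) :=
  (qBinom_le_mul_prod_inv Fq hk).trans (mul_le_mul_of_nonneg_left
    (prod_range_le_gammaq Fintype.one_lt_card k) (by positivity))

end QBinomBound

lemma sum_mul_sub_le {ι : Type*} [Fintype ι] (f : ι → ℝ) (c : ℝ) :
    ∑ i, f i * (c - f i) ≤ (∑ i, f i) * (c - (∑ i, f i) / Fintype.card ι) := by
  have hsq : (∑ i, f i) ^ 2 / Fintype.card ι ≤ ∑ i, f i ^ 2 := by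
    refine div_le_of_le_mul₀ (Nat.cast_nonneg _) (sum_nonneg fun i _ => sq_nonneg (f i)) ?_
    simpa [mul_comm] using sq_sum_le_card_mul_sum_sq (s := univ) (f := f)
  have hlhs : ∑ i, f i * (c - f i) = c * ∑ i, f i - ∑ i, f i ^ 2 := by
    simp only [mul_sub, sum_sub_distrib, mul_sum, sq, mul_comm]
  have hrhs : (∑ i, f i) * (c - (∑ i, f i) / Fintype.card ι) =
      c * ∑ i, f i - (∑ i, f i) ^ 2 / Fintype.card ι := by ring
  linarith

lemma prod_qBinom_le (Fq : Type) [Field Fq] [Fintype Fq] {η ℓ t : ℕ} {f : Fin ℓ → ℕ}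
    (hfη : ∀ i, f i ≤ η) (hft : ∑ i, f i = t) :
    ∏ i, (qBinom Fq η (f i) : ℝ) ≤ (Fintype.card Fq : ℝ) ^ ((t : ℝ) * ((η : ℝ) - (t : ℝ) / ℓ)) *
      gammaq (Fintype.card Fq) ^ ℓ := by
  set q := Fintype.card Fq
  have hq : (1 : ℝ) ≤ q := by exact_mod_cast Fintype.one_lt_card.le
  have hexp : ((∑ i, f i * (η - f i) : ℕ) : ℝ) ≤ (t : ℝ) * ((η : ℝ) - (t : ℝ) / ℓ) := by
    have := sum_mul_sub_le (fun i => (f i : ℝ)) η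
    rw [← Nat.cast_sum, hft, Fintype.card_fin] at this
    push_cast [Nat.cast_sub (hfη _)]
    exact this
  calc ∏ i, (qBinom Fq η (f i) : ℝ)
      ≤ ∏ i, ((q : ℝ) ^ (f i * (η - f i)) * gammaq q) :=
        prod_le_prod (fun i _ => by positivity) fun i _ => qBinom_le_gammaq Fq (hfη i)
    _ = (q : ℝ) ^ (∑ i, f i * (η - f i)) * gammaq q ^ ℓ := by
        rw [prod_mul_distrib, prod_pow_eq_pow_sum, prod_const, card_univ, Fintype.card_fin]
    _ ≤ _ := by
        rw [← Real.rpow_natCast]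
        exact mul_le_mul_of_nonneg_right (Real.rpow_le_rpow_of_exponent_le hq hexp)
          (pow_nonneg (zero_le_one.trans (one_le_gammaq Fintype.one_lt_card)) ℓ)

lemma card_tuples_le (ℓ t μ : ℕ) : #(tuples ℓ t μ) ≤ (t + ℓ - 1).choose (ℓ - 1) := by
  classical
  have hsub : tuples ℓ t μ ⊆ piAntidiag univ t := fun f hf => by
    simp_all [tuples]
  have hcard : #(piAntidiag (univ : Finset (Fin ℓ)) t) = (ℓ + t - 1).choose t := by
    rw [← map_sym_eq_piAntidiag, card_map, sym_univ, card_univ, Sym.card_sym_eq_choose,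
      Fintype.card_fin]
  refine (card_le_card hsub).trans (hcard.trans_le ?_)
  rcases ℓ with _ | ℓ
  · rcases t with _ | t <;> simp
  · rw [show ℓ + 1 + t - 1 = ℓ + t by omega, show t + (ℓ + 1) - 1 = ℓ + t by omega,
      Nat.add_sub_cancel]
    exact Nat.choose_symm_add.ge

theorem stmt17_general (q m η ℓ t : ℕ) (Fq : Type) [Field Fq] [Fintype Fq]
    (hq : Fintype.card Fq = q) :
    cardU Fq ℓ η (min m η) t = ∑ f ∈ tuples ℓ t (min m η), ∏ i, qBinom Fq η (f i) ∧
      (cardU Fq ℓ η (min m η) t : ℝ) ≤ (Nat.choose (t + ℓ - 1) (ℓ - 1) : ℝ) *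
        (q : ℝ) ^ ((t : ℝ) * ((η : ℝ) - (t : ℝ) / ℓ)) * (gammaq q) ^ ℓ := by
  have hcard := cardU_eq_sum_prod_qBinom (F := Fq) (η := η) ℓ (min m η) t
  refine ⟨hcard, ?_⟩
  subst hq
  set B := (Fintype.card Fq : ℝ) ^ ((t : ℝ) * ((η : ℝ) - (t : ℝ) / ℓ)) *
    gammaq (Fintype.card Fq) ^ ℓ
  have hB : 0 ≤ B := by
    have := one_le_gammaq (Fintype.one_lt_card (α := Fq))
    positivity
  have hterm : ∀ f ∈ tuples ℓ t (min m η), ((∏ i, qBinom Fq η (f i) : ℕ) : ℝ) ≤ B := by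
    intro f hf
    simp only [tuples, Fintype.mem_piFinset, mem_range, mem_filter] at hf
    exact_mod_cast prod_qBinom_le Fq
      (fun i => (Nat.le_of_lt_succ (hf.1 i)).trans (min_le_right m η)) hf.2
  calc (cardU Fq ℓ η (min m η) t : ℝ)
      ≤ #(tuples ℓ t (min m η)) * B := by
        rw [hcard, Nat.cast_sum]
        simpa using sum_le_sum hterm
    _ ≤ _ := by
        rw [mul_assoc]
        exact mul_le_mul_of_nonneg_right (by exact_mod_cast card_tuples_le ℓ t (min m η)) hB

theorem stmt17 (q m η ℓ t : ℕ) (Fq : Type) [Field Fq] [Fintype Fq]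
    (hq : Fintype.card Fq = q) (hη : 0 < η) (hℓ : 0 < ℓ) (ht : 0 < t) (hm : 0 < m) :
    cardU Fq ℓ η (min m η) t = ∑ f ∈ tuples ℓ t (min m η), ∏ i, qBinom Fq η (f i) ∧
      (cardU Fq ℓ η (min m η) t : ℝ) ≤ (Nat.choose (t + ℓ - 1) (ℓ - 1) : ℝ) *
        (q : ℝ) ^ ((t : ℝ) * ((η : ℝ) - (t : ℝ) / ℓ)) * (gammaq q) ^ ℓ :=
  stmt17_general q m η ℓ t Fq hq
end
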